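/- The interquartile range does not preserve the ∧-discrete dispersive order: let F be the distribution with P(X=1)=P(X=4)=3/10 and P(X=2)=P(X=3)=1/5, and G the uniform distribution on {1,2,3,4,5}. Then F ≼_∧ G, but F⁻¹(3/4) - F⁻¹(1/4) > G⁻¹(3/4) - G⁻¹(1/4), where F⁻¹(p) = inf{t : F(t) ≥ p}. -/

import Mathlib

/-- A purposive discrete distribution: support indexed by an interval of `ℤ`
with at least two elements, strictly increasing support points `x` and
positive probabilities `p` summing to one. -/
structure DiscDist where
  A : Set ℤ
  x : ℤ → ℝ
  p : ℤ → ℝ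
  hA2 : ∃ a b, a ∈ A ∧ b ∈ A ∧ a ≠ b
  hAconn : ∀ a b c : ℤ, a ∈ A → c ∈ A → a ≤ b → b ≤ c → b ∈ A
  hmono : ∀ a b : ℤ, a ∈ A → b ∈ A → a < b → x a < x b
  hpos : ∀ a ∈ A, 0 < p a
  hzero : ∀ a ∉ A, p a = 0
  hsummable : Summable p
  hsum : ∑' a, p a = 1

/-- Cumulative probability strictly below index `a`, i.e. `F(x_{a-1})`. -/
noncomputable def DiscDist.L (D : DiscDist) (a : ℤ) : ℝ :=
  ∑' i : ℤ, if i < a then D.p i else 0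

/-- The relation `a ▷◁ b`: the jump intervals `(F(x_{a-1}), F(x_a))` and
`(G(y_{b-1}), G(y_b))` intersect. -/
def DRel (F G : DiscDist) (a b : ℤ) : Prop :=
  a ∈ F.A ∧ b ∈ G.A ∧
    max (F.L a) (G.L b) < min (F.L (a + 1)) (G.L (b + 1))

/-- The ∧-discrete dispersive order `F ≼_∧ G`. -/
def discoA (F G : DiscDist) : Prop :=
  (∀ a b, DRel F G a b → G.p b ≤ F.p a) ∧
  (∀ a b, DRel F G a b → DRel F G (a - 1) (b - 1) →
    F.x a - F.x (a - 1) ≤ G.x b - G.x (b - 1))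

/-- The ∨-discrete dispersive order `F ≼_∨ G`. -/
def discoO (F G : DiscDist) : Prop :=
  (∀ a b, DRel F G a b → G.p b ≤ F.p a) ∧
  (∀ a b, a ∈ F.A → a - 1 ∈ F.A → b ∈ G.A → b - 1 ∈ G.A →
    (DRel F G a b ∨ DRel F G (a - 1) (b - 1)) →
    F.x a - F.x (a - 1) ≤ G.x b - G.x (b - 1))

/-- Cumulative distribution function of a discrete distribution. -/
noncomputable def DiscDist.cdf (D : DiscDist) (t : ℝ) : ℝ :=
  ∑' a : ℤ, if D.x a ≤ t then D.p a else 0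

/-- The discrete uniform distribution on `{1, ..., n}`. -/
noncomputable def unifDist (n : ℤ) (hn : 2 ≤ n) : DiscDist where
  A := Set.Icc 1 n
  x := fun a => (a : ℝ)
  p := fun a => if 1 ≤ a ∧ a ≤ n then ((n : ℝ))⁻¹ else 0
  hA2 := ⟨1, 2, by simp [Set.mem_Icc]; omega, by simp [Set.mem_Icc]; omega, by omega⟩
  hAconn := by intro a b c ha hc hab hbc; simp only [Set.mem_Icc] at *; omega
  hmono := by intro a b _ _ hab; beta_reduce; exact_mod_cast hab
  hpos := by
    intro a ha
    simp only [Set.mem_Icc] at ha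
    beta_reduce
    rw [if_pos ha]
    have : (0 : ℝ) < (n : ℝ) := by exact_mod_cast (by omega : (0 : ℤ) < n)
    positivity
  hzero := by
    intro a ha
    simp only [Set.mem_Icc] at ha
    beta_reduce
    rw [if_neg]; omega
  hsummable := by
    apply summable_of_ne_finset_zero (s := Finset.Icc 1 n)
    intro a ha
    simp only [Finset.mem_Icc] at ha
    rw [if_neg]; omega
  hsum := by
    rw [tsum_eq_sum (s := Finset.Icc 1 n)
      (by intro a ha; simp only [Finset.mem_Icc] at ha; rw [if_neg]; omega)]
    have hcard : (Finset.Icc (1 : ℤ) n).card = (n : ℤ).toNat := by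
      rw [Int.card_Icc]; omega
    rw [Finset.sum_congr rfl (fun a ha => by
      simp only [Finset.mem_Icc] at ha; rw [if_pos ha])]
    rw [Finset.sum_const, hcard, nsmul_eq_mul]
    have hn0 : (n : ℝ) ≠ 0 := by exact_mod_cast (by omega : n ≠ 0)
    have : ((n.toNat : ℝ)) = (n : ℝ) := by exact_mod_cast (by omega : (n.toNat : ℤ) = n)
    rw [this, mul_inv_cancel₀ hn0]


/-- Left-continuous quantile function of a cdf. -/
noncomputable def quantile (F : ℝ → ℝ) (p : ℝ) : ℝ := sInf {t : ℝ | p ≤ F t}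

/-- The distribution with `P(X=1)=P(X=4)=3/10`, `P(X=2)=P(X=3)=1/5`. -/
noncomputable def F17 : DiscDist where
  A := Set.Icc 1 4
  x := fun a => (a : ℝ)
  p := fun a => if a = 1 ∨ a = 4 then 3 / 10 else if a = 2 ∨ a = 3 then 1 / 5 else 0
  hA2 := ⟨1, 2, by norm_num [Set.mem_Icc], by norm_num [Set.mem_Icc], by omega⟩
  hAconn := by intro a b c ha hc hab hbc; simp only [Set.mem_Icc] at *; omega
  hmono := by intro a b _ _ hab; beta_reduce; exact_mod_cast hab
  hpos := by
    intro a ha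
    simp only [Set.mem_Icc] at ha
    beta_reduce
    split_ifs with h1 h2 <;> [norm_num; norm_num; omega]
  hzero := by
    intro a ha
    simp only [Set.mem_Icc] at ha
    by_cases h1 : a = 1 ∨ a = 4
    · omega
    · by_cases h2 : a = 2 ∨ a = 3
      · omega
      · simp [h1, h2]
  hsummable := by
    apply summable_of_ne_finset_zero (s := Finset.Icc 1 4)
    intro a ha
    simp only [Finset.mem_Icc] at ha
    by_cases h1 : a = 1 ∨ a = 4
    · omega
    · by_cases h2 : a = 2 ∨ a = 3
      · omega
      · simp [h1, h2]
  hsum := by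
    rw [tsum_eq_sum (s := Finset.Icc 1 4) (by
      intro a ha
      simp only [Finset.mem_Icc] at ha
      by_cases h1 : a = 1 ∨ a = 4
      · omega
      · by_cases h2 : a = 2 ∨ a = 3
        · omega
        · simp [h1, h2])]
    show (Finset.Icc (1 : ℤ) 4).sum _ = 1
    rw [show Finset.Icc (1 : ℤ) 4 = {1, 2, 3, 4} by decide]
    norm_num


/-!
Every mass of `F` is at least `1/5`, the common mass of `G`, and both distributions have all
spacings equal to `1`; so both conditions of `≼_∧` hold for every pair of indices, whether or not
the jump intervals overlap. The quartiles, however, are `F⁻¹(1/4) = 1`, `F⁻¹(3/4) = 4` because `F`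
puts `3/10 > 1/4` on each end point, against `G⁻¹(1/4) = 2`, `G⁻¹(3/4) = 4`.
-/

namespace DiscDist

theorem cdf_eq_sum (D : DiscDist) {s : Finset ℤ} (hs : ∀ a ∉ s, D.p a = 0) (t : ℝ) :
    D.cdf t = ∑ a ∈ s, if D.x a ≤ t then D.p a else 0 :=
  tsum_eq_sum fun a ha => by simp [hs a ha]

end DiscDist

theorem discoA_of_forall_mem (F G : DiscDist)
    (hp : ∀ a ∈ F.A, ∀ b ∈ G.A, G.p b ≤ F.p a)
    (hx : ∀ a ∈ F.A, ∀ b ∈ G.A, a - 1 ∈ F.A → b - 1 ∈ G.A →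
      F.x a - F.x (a - 1) ≤ G.x b - G.x (b - 1)) :
    discoA F G :=
  ⟨fun _ _ ⟨ha, hb, _⟩ => hp _ ha _ hb,
    fun _ _ ⟨ha, hb, _⟩ ⟨ha', hb', _⟩ => hx _ ha _ hb ha' hb'⟩

theorem quantile_eq_of_forall_le_iff {F : ℝ → ℝ} {p c : ℝ} (h : ∀ t, p ≤ F t ↔ c ≤ t) :
    quantile F p = c := by
  rw [quantile, show {t | p ≤ F t} = Set.Ici c from Set.ext h, csInf_Ici]

theorem unifDist_p_of_mem {n : ℤ} (hn : 2 ≤ n) {b : ℤ} (hb : b ∈ (unifDist n hn).A) :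
    (unifDist n hn).p b = (n : ℝ)⁻¹ :=
  if_pos hb

theorem unifDist_cdf_five (t : ℝ) :
    (unifDist 5 (by norm_num)).cdf t =
      (if 1 ≤ t then 5⁻¹ else 0) + (if 2 ≤ t then 5⁻¹ else 0) + (if 3 ≤ t then 5⁻¹ else 0) +
        (if 4 ≤ t then 5⁻¹ else 0) + (if 5 ≤ t then 5⁻¹ else 0) := by
  rw [DiscDist.cdf_eq_sum _ (s := {1, 2, 3, 4, 5})
    (fun a ha => (unifDist 5 _).hzero a (by simp [unifDist] at ha ⊢; omega))]
  simp [unifDist, add_assoc]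

theorem F17_cdf (t : ℝ) :
    F17.cdf t =
      (if 1 ≤ t then 3 / 10 else 0) + (if 2 ≤ t then 1 / 5 else 0) +
        (if 3 ≤ t then 1 / 5 else 0) + (if 4 ≤ t then 3 / 10 else 0) := by
  rw [DiscDist.cdf_eq_sum _ (s := {1, 2, 3, 4})
    (fun a ha => F17.hzero a (by simp [F17] at ha ⊢; omega))]
  simp [F17, add_assoc]

theorem F17_p_ge_of_mem {a : ℤ} (ha : a ∈ F17.A) : 1 / 5 ≤ F17.p a := by
  simp only [F17, Set.mem_Icc] at ha ⊢
  split_ifs <;> norm_num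
  omega

theorem F17_discoA_unifDist_five : discoA F17 (unifDist 5 (by norm_num)) := by
  refine discoA_of_forall_mem _ _ (fun a ha b hb => ?_) (fun a _ b _ _ _ => ?_)
  · rw [unifDist_p_of_mem _ hb]
    exact le_of_eq_of_le (by norm_num) (F17_p_ge_of_mem ha)
  · simp [F17, unifDist]

theorem unifDist_five_quantile_one_quarter :
    quantile (unifDist 5 (by norm_num)).cdf (1 / 4) = 2 :=
  quantile_eq_of_forall_le_iff fun t => by
    rw [unifDist_cdf_five]
    constructor <;> intro h <;> split_ifs at * <;> linarith

theorem unifDist_five_quantile_three_quarters :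
    quantile (unifDist 5 (by norm_num)).cdf (3 / 4) = 4 :=
  quantile_eq_of_forall_le_iff fun t => by
    rw [unifDist_cdf_five]
    constructor <;> intro h <;> split_ifs at * <;> linarith

theorem F17_quantile_one_quarter : quantile F17.cdf (1 / 4) = 1 :=
  quantile_eq_of_forall_le_iff fun t => by
    rw [F17_cdf]
    constructor <;> intro h <;> split_ifs at * <;> linarith

theorem F17_quantile_three_quarters : quantile F17.cdf (3 / 4) = 4 :=
  quantile_eq_of_forall_le_iff fun t => by
    rw [F17_cdf]
    constructor <;> intro h <;> split_ifs at * <;> linarith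

/-- The interquartile range does not preserve `≼_∧`: with `F = F17` and
`G = U{1,...,5}`, we have `F ≼_∧ G` but `IQR(F) > IQR(G)`. -/
theorem stmt_17 :
    discoA F17 (unifDist 5 (by norm_num)) ∧
    quantile (unifDist 5 (by norm_num)).cdf (3 / 4) -
        quantile (unifDist 5 (by norm_num)).cdf (1 / 4) <
      quantile F17.cdf (3 / 4) - quantile F17.cdf (1 / 4) := by
  refine ⟨F17_discoA_unifDist_five, ?_⟩
  rw [unifDist_five_quantile_one_quarter, unifDist_five_quantile_three_quarters,
    F17_quantile_one_quarter, F17_quantile_three_quarters]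
  norm_num
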